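/- Let n ∈ ℕ, r ≥ p−1, and let m_0,…,m_r be Walsh polynomials of order p^n − 1 with polyphase components μ_{ν,s}. Then for each fixed ω ∈ G the following two conditions are equivalent: (i) Σ_{ν=0}^{r} m_ν(ω ⊕ δ_s) conj(m_ν(ω ⊕ δ_{s'})) = δ_{s,s'} for all s, s' ∈ {0,…,p−1}; (ii) Σ_{ν=0}^{r} μ_{ν,s}(Aω) conj(μ_{ν,s'}(Aω)) = δ_{s,s'} for all s, s' ∈ {0,…,p−1}. -/

import Mathlib

open MeasureTheory Filter Topology Matrix

noncomputable section

namespace Vilenkin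

/-- The underlying additive subgroup of `ℤ → ZMod p` consisting of sequences that
vanish for all sufficiently small indices. -/
def VilSub (p : ℕ) : AddSubgroup (ℤ → ZMod p) where
  carrier := {x | ∃ k : ℤ, ∀ j < k, x j = 0}
  zero_mem' := ⟨0, fun _ _ => rfl⟩
  add_mem' := by
    rintro a b ⟨ka, hka⟩ ⟨kb, hkb⟩
    refine ⟨min ka kb, fun j hj => ?_⟩
    have h1 := hka j (lt_of_lt_of_le hj (min_le_left _ _))
    have h2 := hkb j (lt_of_lt_of_le hj (min_le_right _ _))
    show a j + b j = 0
    rw [h1, h2, add_zero]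
  neg_mem' := by
    rintro a ⟨ka, hka⟩
    refine ⟨ka, fun j hj => ?_⟩
    show -a j = 0
    rw [hka j hj, neg_zero]

/-- The Vilenkin group `G = G_p`. -/
abbrev Vil (p : ℕ) := {x : ℤ → ZMod p // x ∈ VilSub p}

/-- The (iterated) shift automorphism: `Ash p t x` is `A^t x`, with `(A x)_j = x_{j+1}`. -/
def Ash (p : ℕ) (t : ℤ) (x : Vil p) : Vil p :=
  ⟨fun j => x.1 (j + t), by
    obtain ⟨k, hk⟩ := x.2
    exact ⟨k - t, fun j hj => hk (j + t) (by omega)⟩⟩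

/-- `λ(x) = Σ_j x_j p^{-j}`. -/
def lam (p : ℕ) (x : Vil p) : ℝ := ∑' j : ℤ, ((x.1 j).val : ℝ) * (p : ℝ) ^ (-j)

/-- `λ` restricted to `H` with values in `ℕ`:  `Σ_{i ≥ 0} x_{-i} p^i`. -/
def lamNat (p : ℕ) (x : Vil p) : ℕ := ∑' i : ℕ, (x.1 (-(i : ℤ))).val * p ^ i

/-- The element `h_[α]` of `H` with `λ(h_[α]) = α` (base-`p` digits of `α`). -/
def hElt (p : ℕ) (α : ℕ) : Vil p :=
  ⟨fun j => if j ≤ 0 then ((α / p ^ (-j).toNat : ℕ) : ZMod p) else 0, by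
    refine ⟨-(α : ℤ), fun j hj => ?_⟩
    have hj0 : j ≤ 0 := by omega
    show (if j ≤ 0 then ((α / p ^ (-j).toNat : ℕ) : ZMod p) else 0) = 0
    rw [if_pos hj0]
    rcases Nat.lt_or_ge p 2 with hp | hp
    · interval_cases p
      · have hn : (-j).toNat ≠ 0 := by omega
        simp [zero_pow hn]
      · exact Subsingleton.elim _ _
    · have hn : α < (-j).toNat := by omega
      have h2 : α < 2 ^ (-j).toNat := lt_trans hn (by first | exact Nat.lt_two_pow_self | exact Nat.lt_two_pow_self _)
      have hpow : α < p ^ (-j).toNat :=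
        lt_of_lt_of_le h2 (Nat.pow_le_pow_left hp _)
      rw [Nat.div_eq_of_lt hpow]
      simp⟩

/-- The character `χ(x, ω) = exp((2πi/p) Σ_j x_j ω_{1-j})`. -/
def chi (p : ℕ) (x ω : Vil p) : ℂ :=
  Complex.exp ((2 * Real.pi * Complex.I / p) *
    ∑' j : ℤ, (((x.1 j).val : ℂ) * ((ω.1 (1 - j)).val : ℂ)))

/-- The generalized Walsh function `W_α(x) = χ(x, h_[α])`. -/
def Walsh (p : ℕ) (α : ℕ) (x : Vil p) : ℂ := chi p x (hElt p α)

/-- The element `δ_l` of `G` with `λ(δ_l) = l / p`. -/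
def deltaElt (p : ℕ) (l : ℕ) : Vil p :=
  ⟨fun j => if j = 1 then (l : ZMod p) else 0, ⟨1, fun j hj => if_neg (by omega)⟩⟩

/-- `U_l = {x : x_j = 0 for j ≤ l}`. -/
def Uball (p : ℕ) (l : ℤ) : Set (Vil p) := {x | ∀ j ≤ l, x.1 j = 0}

/-- `U = U_0`. -/
def Uset (p : ℕ) : Set (Vil p) := Uball p 0

/-- `H = {x : x_j = 0 for j > 0}`. -/
def Hset (p : ℕ) : Set (Vil p) := {x | ∀ j : ℤ, 0 < j → x.1 j = 0}

/-- The non-Archimedean norm `‖x‖ = p^{-k(x)}`, `‖θ‖ = 0`. -/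
def vnorm (p : ℕ) (x : Vil p) : ℝ := ⨆ j : ℤ, (if x.1 j ≠ 0 then (p : ℝ) ^ (-j) else 0)

/-- The Vilenkin topology, generated by the cosets of the subgroups `U_l`. -/
instance (p : ℕ) : TopologicalSpace (Vil p) :=
  TopologicalSpace.generateFrom
    {S | ∃ (x : Vil p) (l : ℤ), S = {y : Vil p | ∀ j ≤ l, y.1 j = x.1 j}}

instance (p : ℕ) : MeasurableSpace (Vil p) := borel (Vil p)

/-- `μ` is the Haar measure on `G`: translation invariant and normalized by `μ(U) = 1`. -/
def IsHaar (p : ℕ) (μ : Measure (Vil p)) : Prop :=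
  (∀ (a : Vil p) (s : Set (Vil p)), μ ((fun x => a + x) ⁻¹' s) = μ s) ∧ μ (Uset p) = 1

/-- The Fourier transform (integral form) `f̂(ω) = ∫ f(x) conj χ(x,ω) dμ(x)`. -/
def FT (p : ℕ) (μ : Measure (Vil p)) (f : Vil p → ℂ) (ω : Vil p) : ℂ :=
  ∫ x, f x * (starRingEnd ℂ) (chi p x ω) ∂μ

/-- The `L²` inner product `⟨f, g⟩ = ∫ f conj g dμ`. -/
def ip (p : ℕ) (μ : Measure (Vil p)) (f g : Vil p → ℂ) : ℂ :=
  ∫ x, f x * (starRingEnd ℂ) (g x) ∂μ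

/-- The dilated-translated system `ψ_{j,k}(x) = p^{j/2} ψ(A^j x ⊖ h_[k])`. -/
def wsys (p : ℕ) (ψ : Vil p → ℂ) (j : ℤ) (k : ℕ) (x : Vil p) : ℂ :=
  ((Real.sqrt p ^ j : ℝ) : ℂ) * ψ (Ash p j x - hElt p k)

/-- `m` is the Walsh polynomial of order `p^n - 1` with coefficients `a`. -/
def IsWalshPolyOfOrder (p n : ℕ) (a : ℕ → ℂ) (m : Vil p → ℂ) : Prop :=
  ∀ ω, m ω = ∑ α ∈ Finset.range (p ^ n), a α * (starRingEnd ℂ) (Walsh p α ω)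

/-- `m` is a Walsh polynomial. -/
def IsWalshPoly (p : ℕ) (m : Vil p → ℂ) : Prop :=
  ∃ n a, IsWalshPolyOfOrder p n a m

/-- The polyphase component `μ_{ν,s}(ω) = √p Σ_{α < p^{n-1}} a_{pα+s} conj W_α(ω)`. -/
def polyphase (p n : ℕ) (a : ℕ → ℂ) (s : ℕ) (ω : Vil p) : ℂ :=
  (Real.sqrt p : ℂ) *
    ∑ α ∈ Finset.range (p ^ (n - 1)), a (p * α + s) * (starRingEnd ℂ) (Walsh p α ω)

/-- The matrix `M(ω)` with entries `M(ω)_{l,ν} = m_ν(ω ⊕ δ_l)`. -/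
def MaskMatrix (p r : ℕ) (m : Fin (r + 1) → Vil p → ℂ) (ω : Vil p) :
    Matrix (Fin p) (Fin (r + 1)) ℂ :=
  Matrix.of fun l ν => m ν (ω + deltaElt p (l : ℕ))

/-- The unitary extension condition `M(ω) M(ω)* = I_p` for all `ω`. -/
def UEP (p r : ℕ) (m : Fin (r + 1) → Vil p → ℂ) : Prop :=
  ∀ ω : Vil p, MaskMatrix p r m ω * (MaskMatrix p r m ω)ᴴ = 1

/-- Condition (*): `Σ_{l<p} |m_0(ω ⊕ δ_l)|² ≤ 1` for all `ω`. -/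
def StarCond (p : ℕ) (m0 : Vil p → ℂ) : Prop :=
  ∀ ω : Vil p, ∑ l ∈ Finset.range p, ‖m0 (ω + deltaElt p l)‖ ^ 2 ≤ 1

/-- `φ` satisfies the refinement equation with coefficients `a` (of length `p^n`). -/
def RefinableWithMask (p n : ℕ) (a : ℕ → ℂ) (φ : Vil p → ℂ) : Prop :=
  ∀ x, φ x = p * ∑ α ∈ Finset.range (p ^ n), a α * φ (Ash p 1 x - hElt p α)

/-- The coset `U_{n,l} = A^{-n}(h_[l]) ⊕ A^{-n}(U)`. -/
def Unl (p : ℕ) (n l : ℕ) : Set (Vil p) :=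
  (fun u => Ash p (-(n : ℤ)) (hElt p l) + Ash p (-(n : ℤ)) u) '' Uset p

/-- Membership in the Sobolev space `W₂^m`, phrased in terms of (a representative of)
the Fourier transform `fhat` of `f`. -/
def MemW2 (p : ℕ) (μ : Measure (Vil p)) (m : ℕ) (fhat : Vil p → ℂ) : Prop :=
  ∀ k ≤ m, Integrable (fun ω => vnorm p ω ^ (2 * k) * ‖fhat ω‖ ^ 2) μ

/-- The Sobolev norm `‖f‖_{2,m}`, phrased via the Fourier transform `fhat` of `f`. -/
def sobNorm (p : ℕ) (μ : Measure (Vil p)) (m : ℕ) (fhat : Vil p → ℂ) : ℝ :=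
  ∑ k ∈ Finset.range (m + 1), Real.sqrt (∫ ω, vnorm p ω ^ (2 * k) * ‖fhat ω‖ ^ 2 ∂μ)

end Vilenkin

/-!
Splitting `α = pβ + s` gives `W_{pβ+s}(x) = W_β(Ax) W_s(x)`, hence the polyphase decomposition
`m_ν(x) = p^{-1/2} Σ_s conj W_s(x) μ_{ν,s}(Ax)`. As `μ_{ν,s}(A(ω ⊕ δ_l)) = μ_{ν,s}(Aω)`, the matrix
`(m_ν(ω ⊕ δ_l))_{l,ν}` is `U P` with `P = (μ_{ν,s}(Aω))_{s,ν}` and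
`U_{l,s} = p^{-1/2} conj W_s(ω ⊕ δ_l) = p^{-1/2} e^{-2πi(ω_1 + l)s/p}`, a discrete Fourier matrix.
`U` is unitary, so `U P (U P)* = U (P P*) U*` is the identity iff `P P*` is.
-/

namespace Finset

theorem sum_range_mul_eq_sum_sum {M : Type*} [AddCommMonoid M] (f : ℕ → M) (p q : ℕ) :
    ∑ α ∈ range (p * q), f α = ∑ β ∈ range q, ∑ s ∈ range p, f (p * β + s) := by
  induction q with
  | zero => simp
  | succ q ih => rw [mul_add_one, sum_range_add, ih, sum_range_succ]

end Finset

namespace ZMod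

theorem conj_stdAddChar {N : ℕ} [NeZero N] (t : ZMod N) :
    (starRingEnd ℂ) (stdAddChar t) = stdAddChar (-t) := by
  rw [stdAddChar_apply, stdAddChar_apply, AddChar.map_neg_eq_inv, Circle.coe_inv_eq_conj]

theorem sum_fin_natCast {N : ℕ} [NeZero N] {M : Type*} [AddCommMonoid M] (f : ZMod N → M) :
    ∑ s : Fin N, f (s : ℕ) = ∑ t, f t := by
  have hinj : Function.Injective fun s : Fin N => ((s : ℕ) : ZMod N) := fun s s' h => by
    simpa [Fin.ext_iff, val_cast_of_lt s.2, val_cast_of_lt s'.2] using congrArg val h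
  exact Fintype.sum_bijective _ ((Fintype.bijective_iff_injective_and_card _).2 ⟨hinj, by simp⟩)
    _ _ fun _ => rfl

end ZMod

theorem Matrix.forall_sum_mul_star_eq_ite_iff {R m ι : Type*} [CommSemiring R] [StarRing R]
    [Fintype ι] [DecidableEq m] (A : Matrix m ι R) :
    (∀ i j, ∑ k, A i k * starRingEnd R (A j k) = if i = j then 1 else 0) ↔ A * Aᴴ = 1 := by
  simp only [← Matrix.ext_iff, Matrix.mul_apply, Matrix.one_apply, Matrix.conjTranspose_apply,
    starRingEnd_apply]

theorem Unitary.mul_mul_star_eq_one_iff {R : Type*} [Monoid R] [StarMul R] {U : R}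
    (hU : U ∈ unitary R) (X : R) : U * X * star U = 1 ↔ X = 1 := by
  refine ⟨fun h => ?_, fun h => by rw [h, mul_one, Unitary.mul_star_self_of_mem hU]⟩
  calc X = star U * U * X * (star U * U) := by
        rw [Unitary.star_mul_self_of_mem hU, one_mul, mul_one]
    _ = star U * (U * X * star U) * U := by simp only [mul_assoc]
    _ = 1 := by rw [h, mul_one, Unitary.star_mul_self_of_mem hU]

namespace Vilenkin

open Finset ZMod

variable {p : ℕ}

theorem chi_eq_stdAddChar [NeZero p] (x ω : Vil p) (S : Finset ℤ)
    (hS : ∀ j ∉ S, ω.1 (1 - j) = 0) :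
    chi p x ω = stdAddChar (∑ j ∈ S, x.1 j * ω.1 (1 - j)) := by
  have hsum : ∑' j : ℤ, ((x.1 j).val * (ω.1 (1 - j)).val : ℂ)
      = ∑ j ∈ S, ((x.1 j).val * (ω.1 (1 - j)).val : ℂ) :=
    tsum_eq_sum fun j hj => by simp [hS j hj]
  have hcast : ∑ j ∈ S, x.1 j * ω.1 (1 - j)
      = ((∑ j ∈ S, (x.1 j).val * (ω.1 (1 - j)).val : ℕ) : ZMod p) := by
    push_cast [natCast_zmod_val]; rfl
  rw [chi, hsum, hcast, stdAddChar_apply, toCircle_natCast]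
  push_cast
  ring_nf

theorem walsh_eq_stdAddChar [NeZero p] {α N : ℕ} (hα : α < p ^ N) (x : Vil p) :
    Walsh p α x = stdAddChar (∑ i ∈ range N, x.1 (i + 1) * ((α / p ^ i : ℕ) : ZMod p)) := by
  have hinj : Set.InjOn (fun i : ℕ => (i : ℤ) + 1) (range N) := fun i _ j _ h => by simpa using h
  rw [Walsh, chi_eq_stdAddChar x _ ((range N).image fun i : ℕ => (i : ℤ) + 1), sum_image hinj]
  · refine congrArg _ (sum_congr rfl fun i _ => ?_)
    simp [hElt]
  · intro j hj
    simp only [hElt]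
    split_ifs with h
    · have hN : N ≤ (-(1 - j)).toNat := by
        by_contra! hk
        exact hj (mem_image.2 ⟨(j - 1).toNat, by simp; omega, by omega⟩)
      have hlt : α < p ^ (-(1 - j)).toNat :=
        hα.trans_le (Nat.pow_le_pow_right (Nat.pos_of_neZero p) hN)
      rw [Nat.div_eq_of_lt hlt, Nat.cast_zero]
    · rfl

theorem walsh_of_lt [NeZero p] {s : ℕ} (hs : s < p) (x : Vil p) :
    Walsh p s x = stdAddChar (x.1 1 * (s : ZMod p)) := by
  rw [walsh_eq_stdAddChar (N := 1) (by simpa using hs)]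
  simp

theorem walsh_mul_add [NeZero p] {β s N : ℕ} (hβ : β < p ^ N) (hs : s < p) (x : Vil p) :
    Walsh p (p * β + s) x = Walsh p β (Ash p 1 x) * Walsh p s x := by
  have hα : p * β + s < p ^ (N + 1) := by
    calc p * β + s < p * (β + 1) := by rw [mul_add_one]; omega
      _ ≤ p ^ (N + 1) := by rw [pow_succ']; exact Nat.mul_le_mul_left p hβ
  rw [walsh_eq_stdAddChar hα, walsh_eq_stdAddChar hβ, walsh_of_lt hs,
    ← AddChar.map_add_eq_mul, sum_range_succ']
  congr 2
  · refine sum_congr rfl fun i _ => ?_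
    rw [pow_succ', ← Nat.div_div_eq_div_mul, Nat.mul_add_div (Nat.pos_of_neZero p),
      Nat.div_eq_of_lt hs, add_zero]
    simp [Ash]
  · simp

theorem walsh_ash_add_deltaElt [NeZero p] {β N : ℕ} (hβ : β < p ^ N) (x : Vil p) (l : ℕ) :
    Walsh p β (Ash p 1 (x + deltaElt p l)) = Walsh p β (Ash p 1 x) := by
  rw [walsh_eq_stdAddChar hβ, walsh_eq_stdAddChar hβ]
  refine congrArg _ (sum_congr rfl fun i _ => ?_)
  simp only [Ash, deltaElt, AddMemClass.coe_add, Pi.add_apply]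
  rw [if_neg (by omega), add_zero]

theorem IsWalshPolyOfOrder.eq_sum_polyphase [NeZero p] {n : ℕ} (hn : 1 ≤ n) {a : ℕ → ℂ}
    {m : Vil p → ℂ} (hm : IsWalshPolyOfOrder p n a m) (x : Vil p) :
    m x = ∑ s ∈ range p,
      (Real.sqrt p : ℂ)⁻¹ * (starRingEnd ℂ) (Walsh p s x) * polyphase p n a s (Ash p 1 x) := by
  have hsqrt : (Real.sqrt p : ℂ) ≠ 0 := by
    exact_mod_cast (Real.sqrt_pos.2 (Nat.cast_pos.2 (Nat.pos_of_neZero p))).ne'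
  have hpn : p ^ n = p * p ^ (n - 1) := by rw [← pow_succ']; congr; omega
  rw [hm, hpn, sum_range_mul_eq_sum_sum, sum_comm]
  refine sum_congr rfl fun s hs => ?_
  rw [polyphase, ← mul_assoc, mul_comm _ (Real.sqrt p : ℂ), ← mul_assoc, mul_inv_cancel₀ hsqrt,
    one_mul, mul_sum]
  refine sum_congr rfl fun β hβ => ?_
  rw [walsh_mul_add (mem_range.1 hβ) (mem_range.1 hs), map_mul]
  ring

theorem polyphase_ash_add_deltaElt [NeZero p] (n : ℕ) (a : ℕ → ℂ) (s : ℕ) (x : Vil p) (l : ℕ) :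
    polyphase p n a s (Ash p 1 (x + deltaElt p l)) = polyphase p n a s (Ash p 1 x) := by
  unfold polyphase
  congr 1
  exact sum_congr rfl fun β hβ => by rw [walsh_ash_add_deltaElt (mem_range.1 hβ)]

def walshPhaseMatrix (p : ℕ) (ω : Vil p) : Matrix (Fin p) (Fin p) ℂ :=
  Matrix.of fun l s => (Real.sqrt p : ℂ)⁻¹ * (starRingEnd ℂ) (Walsh p s (ω + deltaElt p l))

theorem walshPhaseMatrix_mem_unitaryGroup [NeZero p] (ω : Vil p) :
    walshPhaseMatrix p ω ∈ Matrix.unitaryGroup (Fin p) ℂ := by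
  rw [Matrix.mem_unitaryGroup_iff]
  ext l l'
  set c : ZMod p := ((l' : ℕ) : ZMod p) - ((l : ℕ) : ZMod p)
  have hterm : ∀ s : Fin p, (starRingEnd ℂ) (Walsh p s (ω + deltaElt p l)) *
      Walsh p s (ω + deltaElt p l') = stdAddChar (((s : ℕ) : ZMod p) * c) := by
    intro s
    rw [walsh_of_lt s.2, walsh_of_lt s.2, conj_stdAddChar, ← AddChar.map_add_eq_mul]
    congr 1
    simp only [deltaElt, AddSubgroup.coe_add, Pi.add_apply, ↓reduceIte, c]
    ring
  have hsqrt : (Real.sqrt p : ℂ)⁻¹ * (Real.sqrt p : ℂ)⁻¹ = (p : ℂ)⁻¹ := by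
    rw [← mul_inv, ← Complex.ofReal_mul, Real.mul_self_sqrt (Nat.cast_nonneg p)]
    push_cast
    rfl
  have hc : c = 0 ↔ l = l' := by
    rw [sub_eq_zero, natCast_eq_natCast_iff', Nat.mod_eq_of_lt l.2, Nat.mod_eq_of_lt l'.2,
      Fin.val_inj, eq_comm]
  calc (walshPhaseMatrix p ω * star (walshPhaseMatrix p ω)) l l'
      = (p : ℂ)⁻¹ * ∑ s : Fin p, stdAddChar (((s : ℕ) : ZMod p) * c) := by
        simp only [Matrix.mul_apply, Matrix.star_apply, walshPhaseMatrix, Matrix.of_apply,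
          ← hterm, mul_sum, ← hsqrt]
        refine sum_congr rfl fun s _ => ?_
        simp only [star_mul', star_inv₀, RCLike.star_def, Complex.conj_ofReal,
          RingHomCompTriple.comp_apply, RingHom.id_apply]
        ring
    _ = (1 : Matrix (Fin p) (Fin p) ℂ) l l' := by
        rw [sum_fin_natCast (fun t => stdAddChar (t * c)),
          AddChar.sum_mulShift _ (isPrimitive_stdAddChar p), Matrix.one_apply]
        simp only [hc, ZMod.card]
        split_ifs <;> simp [NeZero.ne]

def polyphaseMatrix (p n : ℕ) {ι : Type*} (a : ι → ℕ → ℂ) (x : Vil p) : Matrix (Fin p) ι ℂ :=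
  Matrix.of fun s ν => polyphase p n (a ν) s x

theorem maskMatrix_eq_walshPhaseMatrix_mul [NeZero p] {n r : ℕ} (hn : 1 ≤ n)
    {a : Fin (r + 1) → ℕ → ℂ} {m : Fin (r + 1) → Vil p → ℂ}
    (hm : ∀ ν, IsWalshPolyOfOrder p n (a ν) (m ν)) (ω : Vil p) :
    MaskMatrix p r m ω = walshPhaseMatrix p ω * polyphaseMatrix p n a (Ash p 1 ω) := by
  ext l ν
  rw [MaskMatrix, Matrix.of_apply, (hm ν).eq_sum_polyphase hn, Matrix.mul_apply,
    ← Fin.sum_univ_eq_sum_range]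
  simp only [walshPhaseMatrix, polyphaseMatrix, Matrix.of_apply, polyphase_ash_add_deltaElt]

theorem statement5_general (p : ℕ) (hp : 2 ≤ p) (n : ℕ) (hn : 1 ≤ n) (r : ℕ)
    (a : Fin (r + 1) → ℕ → ℂ) (mks : Fin (r + 1) → Vil p → ℂ)
    (hmks : ∀ ν, IsWalshPolyOfOrder p n (a ν) (mks ν)) (ω : Vil p) :
    (∀ s s' : Fin p, ∑ ν : Fin (r + 1),
        mks ν (ω + deltaElt p (s : ℕ)) * (starRingEnd ℂ) (mks ν (ω + deltaElt p (s' : ℕ)))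
          = if s = s' then 1 else 0)
    ↔ (∀ s s' : Fin p, ∑ ν : Fin (r + 1),
        polyphase p n (a ν) (s : ℕ) (Ash p 1 ω) *
          (starRingEnd ℂ) (polyphase p n (a ν) (s' : ℕ) (Ash p 1 ω))
          = if s = s' then 1 else 0) := by
  have : NeZero p := ⟨by omega⟩
  let U := walshPhaseMatrix p ω
  let P := polyphaseMatrix p n a (Ash p 1 ω)
  calc _ ↔ MaskMatrix p r mks ω * (MaskMatrix p r mks ω)ᴴ = 1 :=
        forall_sum_mul_star_eq_ite_iff (MaskMatrix p r mks ω)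
    _ ↔ U * (P * Pᴴ) * star U = 1 := by
        rw [maskMatrix_eq_walshPhaseMatrix_mul hn hmks, Matrix.conjTranspose_mul,
          Matrix.star_eq_conjTranspose]
        simp only [U, P, Matrix.mul_assoc]
    _ ↔ P * Pᴴ = 1 := Unitary.mul_mul_star_eq_one_iff (walshPhaseMatrix_mem_unitaryGroup ω) _
    _ ↔ _ := (forall_sum_mul_star_eq_ite_iff P).symm

/-- **Proposition 4, equivalence (2.10).**  For each fixed `ω ∈ G`, the rows of `M(ω)`
form an orthonormal system iff the polyphase matrix at `Aω` has orthonormal rows: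
`Σ_ν m_ν(ω ⊕ δ_s) conj m_ν(ω ⊕ δ_{s'}) = δ_{s,s'}` for all `s, s'`
iff `Σ_ν μ_{ν,s}(Aω) conj μ_{ν,s'}(Aω) = δ_{s,s'}` for all `s, s'`. -/
theorem statement5 (p : ℕ) (hp : 2 ≤ p) (n : ℕ) (hn : 1 ≤ n) (r : ℕ) (hr : p - 1 ≤ r)
    (a : Fin (r + 1) → ℕ → ℂ) (mks : Fin (r + 1) → Vil p → ℂ)
    (hmks : ∀ ν, IsWalshPolyOfOrder p n (a ν) (mks ν)) (ω : Vil p) :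
    (∀ s s' : Fin p, ∑ ν : Fin (r + 1),
        mks ν (ω + deltaElt p (s : ℕ)) * (starRingEnd ℂ) (mks ν (ω + deltaElt p (s' : ℕ)))
          = if s = s' then 1 else 0)
    ↔ (∀ s s' : Fin p, ∑ ν : Fin (r + 1),
        polyphase p n (a ν) (s : ℕ) (Ash p 1 ω) *
          (starRingEnd ℂ) (polyphase p n (a ν) (s' : ℕ) (Ash p 1 ω))
          = if s = s' then 1 else 0) :=
  statement5_general p hp n hn r a mks hmks ω

end Vilenkin
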